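/- arXiv:1004.0731 — 4 statements merged into one kernel-verified Lean document; each statement's English description precedes it below -/
import Mathlib

section
/- Let $r \ge 3$, let $F_0$ be a field, $\xi$ a primitive $r$-th root of unity over $F_0$, and $c_i, c_j, c_k$ distinct elements of $F_0$ such that $[F_0(c_i,c_j,c_k,\xi) : F_0(c_i,c_j,c_k)] = r - 1$. Then for all $1 \le m, n \le r-1$ we have $\frac{c_i - \xi^n c_j}{1 - \xi^n} \ne \frac{c_i - \xi^m c_k}{1 - \xi^m}$. -/
/-!
Clearing denominators, the equality `c_{i,j,n} = c_{i,k,m}` becomes the linear relation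
`(cᵢ - cⱼ) ξⁿ + (cₖ - cᵢ) ξᵐ + (cⱼ - cₖ) ξˢ = 0` over `F₀`, where `s ≡ n + m (mod r)`, and
`s ≠ n, m` because `ξᵐ, ξⁿ ≠ 1`. Since `ξ` has degree `r - 1`, its minimal polynomial is
`1 + X + ⋯ + X^{r-1}`, so the polynomial of this relation is a constant multiple `λ` of it.
Evaluating at `1`, the coefficients sum to `r λ`, but they also sum to `0`; as `r ≠ 0` in a field
with a primitive `r`-th root of unity, `λ = 0`, and the coefficient `cⱼ - cₖ` of `Xˢ` vanishes.
-/

open Polynomial Finset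

namespace IsPrimitiveRoot

variable {K L : Type*} [Field K] [Field L] [Algebra K L] {r : ℕ} {ξ : L}

theorem natCast_ne_zero (hξ : IsPrimitiveRoot ξ r) (hr : r ≠ 0) : (r : K) ≠ 0 := by
  have : NeZero r := ⟨hr⟩
  intro h
  exact hξ.neZero'.out (by rw [← map_natCast (algebraMap K L), h, map_zero])

theorem minpoly_eq_geom_sum_X (hξ : IsPrimitiveRoot ξ r) (hr : 1 < r)
    (hdeg : (minpoly K ξ).natDegree = r - 1) :
    minpoly K ξ = ∑ i ∈ range r, X ^ i := by
  have hint : IsIntegral K ξ := (hξ.isIntegral (by omega)).tower_top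
  refine (eq_of_monic_of_dvd_of_natDegree_le (minpoly.monic hint) (monic_geom_sum_X (by omega))
    (minpoly.dvd K ξ ?_) ?_).symm
  · simp [hξ.geom_sum_eq_zero hr]
  · rw [hdeg]
    exact natDegree_sum_le_of_forall_le _ _ fun i hi ↦ by
      rw [natDegree_X_pow]
      have := mem_range.1 hi
      omega

theorem eq_zero_of_add_add_eq_zero (hξ : IsPrimitiveRoot ξ r)
    (hdeg : (minpoly K ξ).natDegree = r - 1) {a b c : K} {i j k : ℕ}
    (hi : i < r) (hj : j < r) (hk : k < r) (hki : k ≠ i) (hkj : k ≠ j) (habc : a + b + c = 0)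
    (h : algebraMap K L a * ξ ^ i + algebraMap K L b * ξ ^ j + algebraMap K L c * ξ ^ k = 0) :
    c = 0 := by
  set p : K[X] := C a * X ^ i + C b * X ^ j + C c * X ^ k
  have hr : 1 < r := by omega
  have hpdeg : p.natDegree ≤ (minpoly K ξ).natDegree := by
    rw [hdeg]
    refine natDegree_add_le_of_degree_le (natDegree_add_le_of_degree_le ?_ ?_) ?_ <;>
      exact (natDegree_C_mul_X_pow_le _ _).trans (by omega)
  have hpC : p = (∑ i ∈ range r, X ^ i) * C p.leadingCoeff := by
    rw [← hξ.minpoly_eq_geom_sum_X hr hdeg]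
    exact eq_mul_leadingCoeff_of_monic_of_dvd_of_natDegree_le
      (minpoly.monic (hξ.isIntegral (by omega)).tower_top)
      (minpoly.dvd K ξ (by simpa [p] using h)) hpdeg
  have hlc : (r : K) * p.leadingCoeff = 0 :=
    calc (r : K) * p.leadingCoeff = p.eval 1 := by
          conv_rhs => rw [hpC]
          simp
      _ = a + b + c := by simp [p]
      _ = 0 := habc
  have hp : p = 0 := by
    rw [hpC, (mul_eq_zero.1 hlc).resolve_left (hξ.natCast_ne_zero (by omega)), C_0, mul_zero]
  simpa [p, coeff_X_pow, hki, hkj] using congrArg (coeff · k) hp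

end IsPrimitiveRoot

theorem cijn_ne_cikm_general (F0 E : Type) [Field F0] [Field E] [Algebra F0 E]
    (r : ℕ) (ξ : E) (hξ : IsPrimitiveRoot ξ r)
    (ci cj ck : F0) (hjk : cj ≠ ck)
    (hdeg : Module.finrank F0 (IntermediateField.adjoin F0 {ξ} : IntermediateField F0 E)
      = r - 1) :
    ∀ m n : ℕ, 1 ≤ m → m ≤ r - 1 → 1 ≤ n → n ≤ r - 1 →
      (algebraMap F0 E ci - ξ ^ n * algebraMap F0 E cj) / (1 - ξ ^ n) ≠
        (algebraMap F0 E ci - ξ ^ m * algebraMap F0 E ck) / (1 - ξ ^ m) := by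
  intro m n hm1 hm2 hn1 hn2 heq
  rw [IntermediateField.adjoin.finrank (hξ.isIntegral (by omega)).tower_top] at hdeg
  have hξm : ξ ^ m ≠ 1 := hξ.pow_ne_one_of_pos_of_lt (by omega) (by omega)
  have hξn : ξ ^ n ≠ 1 := hξ.pow_ne_one_of_pos_of_lt (by omega) (by omega)
  obtain ⟨s, hsr, hs⟩ : ∃ s < r, ξ ^ s = ξ ^ n * ξ ^ m :=
    ⟨(n + m) % r, Nat.mod_lt _ (by omega), by rw [← pow_add, hξ.eq_orderOf, pow_mod_orderOf]⟩
  have hsn : s ≠ n := fun h ↦ hξm <| by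
    rw [h] at hs
    exact (mul_eq_left₀ (pow_ne_zero n (hξ.ne_zero (by omega)))).1 hs.symm
  have hsm : s ≠ m := fun h ↦ hξn <| by
    rw [h] at hs
    exact (mul_eq_right₀ (pow_ne_zero m (hξ.ne_zero (by omega)))).1 hs.symm
  rw [div_eq_div_iff (sub_ne_zero.2 hξn.symm) (sub_ne_zero.2 hξm.symm)] at heq
  refine sub_ne_zero.2 hjk <| hξ.eq_zero_of_add_add_eq_zero hdeg (a := ci - cj) (b := ck - ci)
    (by omega) (by omega) hsr hsn hsm (by ring) ?_
  simp only [map_sub, hs]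
  linear_combination heq

/-- If `ξ` is a primitive `r`-th root of unity (`r ≥ 3`) over `F₀`, the
elements `cᵢ, cⱼ, cₖ ∈ F₀` are distinct, and `[F₀(cᵢ,cⱼ,cₖ,ξ) : F₀(cᵢ,cⱼ,cₖ)] = r - 1`
(here `cᵢ,cⱼ,cₖ ∈ F₀`, so this reads `[F₀(ξ) : F₀] = r - 1`), then the quantities
`c_{i,j,n} = (cᵢ - ξⁿ cⱼ)/(1 - ξⁿ)` and `c_{i,k,m}` are distinct for all
`1 ≤ m, n ≤ r - 1`. -/
theorem cijn_ne_cikm (F0 E : Type) [Field F0] [Field E] [Algebra F0 E]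
    (r : ℕ) (hr : 3 ≤ r) (ξ : E) (hξ : IsPrimitiveRoot ξ r)
    (ci cj ck : F0) (hij : ci ≠ cj) (hik : ci ≠ ck) (hjk : cj ≠ ck)
    (hdeg : Module.finrank F0 (IntermediateField.adjoin F0 {ξ} : IntermediateField F0 E)
      = r - 1) :
    ∀ m n : ℕ, 1 ≤ m → m ≤ r - 1 → 1 ≤ n → n ≤ r - 1 →
      (algebraMap F0 E ci - ξ ^ n * algebraMap F0 E cj) / (1 - ξ ^ n) ≠
        (algebraMap F0 E ci - ξ ^ m * algebraMap F0 E ck) / (1 - ξ ^ m) :=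
  cijn_ne_cikm_general F0 E r ξ hξ ci cj ck hjk hdeg
end

section
/- Let $K$ be a function field over an algebraically closed field with a separating element $t$, and let $x \in K$ be non-constant with $dx/dt \ne 0$. Let $\mathfrak{E} = \prod_{d(\mathfrak{p})>0} \mathfrak{p}^{d(\mathfrak{p})}$ where $d(\mathfrak{p}) = \mathrm{ord}_\mathfrak{p}(\partial t/\partial \mathfrak{p})$. Then the pole divisor of $x' = dx/dt$ divides $\mathfrak{d}(x)^2 \mathfrak{E}$, where $\mathfrak{d}(x)$ denotes the pole divisor of $x$. -/
set_option linter.unnecessarySimpa false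

/-- A place of a one-variable function field `K` over its field of constants `F`:
a normalized (`ℤ`-valued, surjective) discrete valuation on `K`, trivial on `F`. -/
structure FFPlace (F K : Type) [Field F] [Field K] [Algebra F K] where
  ord : K → ℤ
  ord_zero : ord 0 = 0
  ord_mul : ∀ x y : K, x ≠ 0 → y ≠ 0 → ord (x * y) = ord x + ord y
  ord_add : ∀ x y : K, x ≠ 0 → y ≠ 0 → x + y ≠ 0 → min (ord x) (ord y) ≤ ord (x + y)
  ord_surj : ∀ n : ℤ, ∃ x : K, x ≠ 0 ∧ ord x = n
  ord_algebraMap : ∀ c : F, c ≠ 0 → ord (algebraMap F K c) = 0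

variable {F K : Type} [Field F] [Field K] [Algebra F K]

theorem FFPlace.ord_one (p : FFPlace F K) : p.ord 1 = 0 := by
  have h := p.ord_mul 1 1 one_ne_zero one_ne_zero
  rw [mul_one] at h; omega

theorem FFPlace.ord_neg (p : FFPlace F K) (x : K) (hx : x ≠ 0) :
    p.ord (-x) = p.ord x := by
  have hm1 : p.ord (-1 : K) = 0 := by
    have h := p.ord_mul (-1) (-1) (by norm_num) (by norm_num)
    rw [neg_mul_neg, one_mul] at h
    rw [p.ord_one] at h; omega
  have h := p.ord_mul (-1) x (by norm_num) hx
  rw [neg_one_mul, hm1, zero_add] at h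
  exact h

/-- The valuation ring of a place. -/
def FFPlace.valRing (p : FFPlace F K) : Subring K where
  carrier := {x : K | x = 0 ∨ 0 ≤ p.ord x}
  zero_mem' := Or.inl rfl
  one_mem' := Or.inr (le_of_eq p.ord_one.symm)
  add_mem' := by
    rintro a b (rfl | ha) (rfl | hb)
    · simpa using Or.inl rfl
    · simpa using Or.inr hb
    · simpa using Or.inr ha
    · by_cases h0 : a = 0
      · subst h0; simpa using Or.inr hb
      by_cases h0' : b = 0
      · subst h0'; simpa using Or.inr ha
      by_cases hab : a + b = 0
      · exact Or.inl hab
      · exact Or.inr (le_trans (le_min ha hb) (p.ord_add a b h0 h0' hab))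
  mul_mem' := by
    rintro a b (rfl | ha) (rfl | hb)
    · simpa using Or.inl rfl
    · simpa using Or.inl rfl
    · simpa using Or.inl rfl
    · by_cases h0 : a = 0
      · subst h0; simpa using Or.inl rfl
      by_cases h0' : b = 0
      · subst h0'; simpa using Or.inl rfl
      · exact Or.inr (by rw [p.ord_mul a b h0 h0']; exact add_nonneg ha hb)
  neg_mem' := by
    rintro a (rfl | ha)
    · simpa using Or.inl rfl
    · by_cases h0 : a = 0
      · subst h0; simpa using Or.inl rfl
      · exact Or.inr (by rw [p.ord_neg a h0]; exact ha)

/-- The maximal ideal of the valuation ring of a place. -/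
def FFPlace.maxIdeal (p : FFPlace F K) : Ideal p.valRing where
  carrier := {x : p.valRing | (x : K) = 0 ∨ 1 ≤ p.ord x}
  zero_mem' := Or.inl rfl
  add_mem' := by
    rintro ⟨a, hamem⟩ ⟨b, hbmem⟩ (ha | ha) (hb | hb) <;>
      simp only [Set.mem_setOf_eq, Subring.coe_add] at *
    · subst ha; subst hb; simp
    · subst ha; simpa using Or.inr hb
    · subst hb; simpa using Or.inr ha
    · by_cases h0 : a = 0
      · subst h0; simpa using Or.inr hb
      by_cases h0' : b = 0
      · subst h0'; simpa using Or.inr ha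
      by_cases hab : a + b = 0
      · exact Or.inl hab
      · exact Or.inr (le_trans (le_min ha hb) (p.ord_add a b h0 h0' hab))
  smul_mem' := by
    rintro ⟨c, hcmem⟩ ⟨a, hamem⟩ (ha | ha) <;>
      simp only [Set.mem_setOf_eq, smul_eq_mul, Subring.coe_mul] at *
    · subst ha; simp
    · by_cases h0 : c = 0
      · subst h0; simp
      by_cases h0' : a = 0
      · subst h0'; simp
      · refine Or.inr ?_
        rw [p.ord_mul c a h0 h0']
        rcases hcmem with rfl | hc
        · exact absurd rfl h0
        · omega

noncomputable instance (p : FFPlace F K) : Algebra F p.valRing :=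
  RingHom.toAlgebra (RingHom.codRestrict (algebraMap F K) p.valRing (by
    intro c
    by_cases hc : c = 0
    · exact Or.inl (by simp [hc])
    · exact Or.inr (le_of_eq (p.ord_algebraMap c hc).symm)))

/-- The degree of a place: the dimension over `F` of its residue field. -/
noncomputable def FFPlace.deg (p : FFPlace F K) : ℕ :=
  Module.finrank F (p.valRing ⧸ p.maxIdeal)

/-- The degree of a divisor (a finitely supported `ℤ`-valued function on places). -/
noncomputable def divDeg (A : FFPlace F K →₀ ℤ) : ℤ :=
  A.sum fun p n => n * p.deg

/-- The Riemann–Roch space `L(A)` of a divisor `A`. -/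
def RRspace (A : FFPlace F K →₀ ℤ) : Submodule F K where
  carrier := {f : K | f = 0 ∨ ∀ p : FFPlace F K, -(A p) ≤ p.ord f}
  zero_mem' := Or.inl rfl
  add_mem' := by
    rintro a b (rfl | ha) (rfl | hb)
    · simpa using Or.inl rfl
    · simpa using Or.inr hb
    · simpa using Or.inr ha
    · by_cases h0 : a = 0
      · subst h0; simpa using Or.inr hb
      by_cases h0' : b = 0
      · subst h0'; simpa using Or.inr ha
      by_cases hab : a + b = 0
      · exact Or.inl hab
      · refine Or.inr fun p => le_trans (le_min (ha p) (hb p))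
          (p.ord_add a b h0 h0' hab)
  smul_mem' := by
    rintro c a (rfl | ha)
    · simpa using Or.inl rfl
    · by_cases hc : c = 0
      · subst hc; simpa using Or.inl rfl
      by_cases h0 : a = 0
      · subst h0; simpa using Or.inl rfl
      · refine Or.inr fun p => ?_
        have hca : (algebraMap F K c) ≠ 0 :=
          fun h => hc ((algebraMap F K).injective (by simpa using h))
        show -(A p) ≤ p.ord (c • a)
        rw [Algebra.smul_def, p.ord_mul _ a hca h0, p.ord_algebraMap c hc, zero_add]
        exact ha p

/-- `ℓ(A)`, the dimension over `F` of the Riemann–Roch space of `A`. -/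
noncomputable def ellDim (A : FFPlace F K →₀ ℤ) : ℕ :=
  Module.finrank F (RRspace A)

/-- `K` is a function field (of one variable) over `F`. -/
def IsFunctionField (F K : Type) [Field F] [Field K] [Algebra F K] : Prop :=
  ∃ t : K, Transcendental F t ∧
    FiniteDimensional (IntermediateField.adjoin F {t}) K

/-- `F` is the exact field of constants of `K`. -/
def IsConstantField (F K : Type) [Field F] [Field K] [Algebra F K] : Prop :=
  ∀ z : K, IsAlgebraic F z → z ∈ (algebraMap F K).range

/-- `K/F` has genus `g`: `g` is the largest value of `deg A - ℓ(A) + 1`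
over all divisors `A` of `K`. -/
def IsGenus (F K : Type) [Field F] [Field K] [Algebra F K] (g : ℕ) : Prop :=
  IsGreatest {n : ℤ | ∃ A : FFPlace F K →₀ ℤ, n = divDeg A - ellDim A + 1} g

/-! At a place `p`, the chain rule gives `ord x' = ord (∂x/∂p) - d(p)`. By Mason's inequalities
`∂x/∂p` is regular where `x` is, and where `x` has a pole of order `n ≥ 1` it has a pole of
order at most `n + 1 ≤ 2n`. -/

theorem FFPlace.neg_ord_deriv_le (p : FFPlace F K) (D : K → K)
    (hmason1 : ∀ y : K, y ≠ 0 → D y ≠ 0 → p.ord y - 1 ≤ p.ord (D y))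
    (hmason2 : ∀ y : K, y ≠ 0 → 0 ≤ p.ord y → D y ≠ 0 → 0 ≤ p.ord (D y))
    {y : K} (hy : y ≠ 0) (hDy : D y ≠ 0) :
    -p.ord (D y) ≤ 2 * max 0 (-p.ord y) := by
  rcases le_or_gt 0 (p.ord y) with hreg | hpole
  · have := hmason2 y hy hreg hDy
    omega
  · have := hmason1 y hy hDy
    omega

theorem pole_divisor_of_derivative_divides_general (F K : Type) [Field F] [Field K]
    [Algebra F K]
    (t : K)
    (x x' : K) (hx : x ∉ (algebraMap F K).range) (hx' : x' ≠ 0)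
    (Dloc : FFPlace F K → K → K)
    -- `t` is separating: `∂t/∂p ≠ 0`
    (hsep : ∀ p : FFPlace F K, Dloc p t ≠ 0)
    -- Mason's order inequalities for the local derivation
    (hmason1 : ∀ (p : FFPlace F K) (y : K), y ≠ 0 → Dloc p y ≠ 0 →
      p.ord y - 1 ≤ p.ord (Dloc p y))
    (hmason2 : ∀ (p : FFPlace F K) (y : K), y ≠ 0 → 0 ≤ p.ord y → Dloc p y ≠ 0 →
      0 ≤ p.ord (Dloc p y))
    -- chain rule relating the global derivative `x' = dx/dt` to the local ones
    (hchain : ∀ p : FFPlace F K, Dloc p x = x' * Dloc p t) :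
    ∀ p : FFPlace F K, p.ord x' < 0 →
      -(p.ord x') ≤ 2 * max 0 (-(p.ord x)) + max 0 (p.ord (Dloc p t)) := by
  intro p _
  have hx0 : x ≠ 0 := fun h => hx ⟨0, by simp [h]⟩
  have hDx : Dloc p x ≠ 0 := hchain p ▸ mul_ne_zero hx' (hsep p)
  have hord : p.ord (Dloc p x) = p.ord x' + p.ord (Dloc p t) := by
    rw [hchain p, p.ord_mul _ _ hx' (hsep p)]
  have hpole := p.neg_ord_deriv_le (Dloc p) (hmason1 p) (hmason2 p) hx0 hDx
  have hd := le_max_right 0 (p.ord (Dloc p t))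
  omega

/-- Let `t` be a separating element, `x` non-constant with `x' = dx/dt ≠ 0`.
For each place `p` let `Dloc p` be the local derivation at `p` (given abstractly with
its characteristic properties: the Mason order inequalities and the chain rule
`∂x/∂p = (dx/dt)·(∂t/∂p)`).  With `d(p) = ord_p(∂t/∂p)` and
`𝔈 = ∏_{d(p)>0} p^{d(p)}`, the pole divisor of `x'` divides `𝔡(x)² 𝔈`, i.e. at every
place `p` where `x'` has a pole, `-ord_p(x') ≤ 2·max(0, -ord_p(x)) + max(0, d(p))`. -/
theorem pole_divisor_of_derivative_divides (F K : Type) [Field F] [Field K]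
    [Algebra F K] [IsAlgClosed F] (hff : IsFunctionField F K)
    (hcf : IsConstantField F K)
    (t : K) (ht : t ∉ (algebraMap F K).range)
    (x x' : K) (hx : x ∉ (algebraMap F K).range) (hx' : x' ≠ 0)
    (Dloc : FFPlace F K → K → K)
    -- each `Dloc p` is a derivation over `F`
    (hadd : ∀ p, ∀ y z : K, Dloc p (y + z) = Dloc p y + Dloc p z)
    (hmul : ∀ p, ∀ y z : K, Dloc p (y * z) = y * Dloc p z + z * Dloc p y)
    (hconst : ∀ p, ∀ c : F, Dloc p (algebraMap F K c) = 0)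
    -- `t` is separating: `∂t/∂p ≠ 0`
    (hsep : ∀ p : FFPlace F K, Dloc p t ≠ 0)
    -- Mason's order inequalities for the local derivation
    (hmason1 : ∀ (p : FFPlace F K) (y : K), y ≠ 0 → Dloc p y ≠ 0 →
      p.ord y - 1 ≤ p.ord (Dloc p y))
    (hmason2 : ∀ (p : FFPlace F K) (y : K), y ≠ 0 → 0 ≤ p.ord y → Dloc p y ≠ 0 →
      0 ≤ p.ord (Dloc p y))
    -- chain rule relating the global derivative `x' = dx/dt` to the local ones
    (hchain : ∀ p : FFPlace F K, Dloc p x = x' * Dloc p t) :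
    ∀ p : FFPlace F K, p.ord x' < 0 →
      -(p.ord x') ≤ 2 * max 0 (-(p.ord x)) + max 0 (p.ord (Dloc p t)) :=
  pole_divisor_of_derivative_divides_general F K t x x' hx hx' Dloc hsep hmason1 hmason2 hchain
end

section
/- Let $K$ be a function field over an algebraically closed field, $t$ a separating element, and $x \in K$ non-constant. Suppose $\mathfrak{p}$ is a place where $x$ has no pole ($\mathrm{ord}_\mathfrak{p}(x) \ge 0$) but $x' = dx/dt$ has a pole. Then $d(\mathfrak{p}) := \mathrm{ord}_\mathfrak{p}(\partial t/\partial\mathfrak{p}) > 0$ and $\mathrm{ord}_\mathfrak{p}(x') \ge -d(\mathfrak{p})$. -/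
set_option linter.unnecessarySimpa false

variable {F K : Type} [Field F] [Field K] [Algebra F K]

theorem FFPlace.neg_ord_le_of_ord_mul_nonneg (p : FFPlace F K) {a b : K} (ha : a ≠ 0)
    (hb : b ≠ 0) (hab : 0 ≤ p.ord (a * b)) : -p.ord b ≤ p.ord a := by
  rw [p.ord_mul a b ha hb] at hab
  omega

theorem derivative_pole_forces_ramification_general (F K : Type) [Field F] [Field K]
    [Algebra F K] (t : K) (x x' : K) (hx : x ∉ (algebraMap F K).range) (hx' : x' ≠ 0)
    (Dloc : FFPlace F K → K → K)
    (hsep : ∀ p : FFPlace F K, Dloc p t ≠ 0)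
    (hmason2 : ∀ (p : FFPlace F K) (y : K), y ≠ 0 → 0 ≤ p.ord y → Dloc p y ≠ 0 →
      max 0 (p.ord y - 1) ≤ p.ord (Dloc p y))
    (hchain : ∀ p : FFPlace F K, Dloc p x = x' * Dloc p t)
    (p : FFPlace F K) (hreg : 0 ≤ p.ord x) (hpole : p.ord x' < 0) :
    0 < p.ord (Dloc p t) ∧ -(p.ord (Dloc p t)) ≤ p.ord x' := by
  have hx0 : x ≠ 0 := fun h => hx ⟨0, by simp [h]⟩
  have hDx : Dloc p x ≠ 0 := hchain p ▸ mul_ne_zero hx' (hsep p)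
  have hDx_reg : 0 ≤ p.ord (x' * Dloc p t) :=
    hchain p ▸ (le_max_left _ _).trans (hmason2 p x hx0 hreg hDx)
  have hbound := p.neg_ord_le_of_ord_mul_nonneg hx' (hsep p) hDx_reg
  exact ⟨by omega, hbound⟩

/-- If `x` has no pole at `p` but `x' = dx/dt` has a pole at `p`, then
`d(p) = ord_p(∂t/∂p) > 0` and `ord_p(x') ≥ -d(p)`.  The local derivation `∂/∂p` is
given abstractly by its characteristic properties (Mason's order inequalities and
the chain rule `∂x/∂p = (dx/dt)·(∂t/∂p)`). -/
theorem derivative_pole_forces_ramification (F K : Type) [Field F] [Field K]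
    [Algebra F K] [IsAlgClosed F] (hff : IsFunctionField F K)
    (hcf : IsConstantField F K)
    (t : K) (ht : t ∉ (algebraMap F K).range)
    (x x' : K) (hx : x ∉ (algebraMap F K).range) (hx' : x' ≠ 0)
    (Dloc : FFPlace F K → K → K)
    (hadd : ∀ p, ∀ y z : K, Dloc p (y + z) = Dloc p y + Dloc p z)
    (hmul : ∀ p, ∀ y z : K, Dloc p (y * z) = y * Dloc p z + z * Dloc p y)
    (hconst : ∀ p, ∀ c : F, Dloc p (algebraMap F K c) = 0)
    (hsep : ∀ p : FFPlace F K, Dloc p t ≠ 0)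
    (hmason1 : ∀ (p : FFPlace F K) (y : K), y ≠ 0 → Dloc p y ≠ 0 →
      p.ord y - 1 ≤ p.ord (Dloc p y))
    (hmason2 : ∀ (p : FFPlace F K) (y : K), y ≠ 0 → 0 ≤ p.ord y → Dloc p y ≠ 0 →
      max 0 (p.ord y - 1) ≤ p.ord (Dloc p y))
    (hchain : ∀ p : FFPlace F K, Dloc p x = x' * Dloc p t)
    (p : FFPlace F K) (hreg : 0 ≤ p.ord x) (hpole : p.ord x' < 0) :
    0 < p.ord (Dloc p t) ∧ -(p.ord (Dloc p t)) ≤ p.ord x' :=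
  derivative_pole_forces_ramification_general F K t x x' hx hx' Dloc hsep hmason2 hchain p hreg
    hpole
end

section
/- Let $K$ be a field of characteristic zero, let $M \ge 2$, and let $x_0, \dots, x_{M-1}, \nu \in K$ with $c_0,\dots,c_{M-1}$ distinct constants satisfy $x_n^r = (\nu + c_n)^r - a$ for all $n$, where $r \ge 2$ and $a \in K$. If some $x_k$ is non-constant (with respect to a derivation $d$ on $K$ with $d(c_n)=0$) and some $x_i$ with $i \ne k$ is constant, then every $x_j$ with $j \ne i$ is non-constant. -/
/-! Differentiating `x_n ^ r = (ν + c_n) ^ r - a` gives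
`r x_n ^ (r - 1) d x_n = r (ν + c_n) ^ (r - 1) d ν - d a`. A constant `x_i` forces
`d a = r (ν + c_i) ^ (r - 1) d ν`; were `ν` constant, `a` and then `x_k` would be constant too.
So `d ν ≠ 0`, and a second constant `x_j` gives `(ν + c_i) ^ (r - 1) = (ν + c_j) ^ (r - 1)`.
Since `ν + c_i` and `ν + c_j` have the same nonzero derivative, equal nonzero powers force them
to be equal, i.e. `c_i = c_j`. -/

namespace Derivation

variable {R A : Type*} [CommRing R] [CommRing A] [Algebra R A] (D : Derivation R A A)

theorem leibniz_pow_of_pow_eq_add_pow_sub {x ν c a : A} {r : ℕ} (hc : D c = 0)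
    (h : x ^ r = (ν + c) ^ r - a) :
    r * x ^ (r - 1) * D x = r * (ν + c) ^ (r - 1) * D ν - D a := by
  have := congrArg D h
  simp only [leibniz_pow, map_sub, map_add, hc, add_zero, nsmul_eq_mul, smul_eq_mul] at this
  simpa only [mul_assoc] using this

variable [IsDomain A] [CharZero A]

/-- Differentiating `u ^ (n + 1) = w ^ (n + 1)` and cancelling `(n + 1) * D u` lowers the
exponent by one. -/
theorem eq_of_pow_eq_pow_of_map_eq {u w : A} (hD : D u = D w) (hu : D u ≠ 0) :
    ∀ {n : ℕ}, n ≠ 0 → u ^ n = w ^ n → u = w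
  | 0, hn, _ => absurd rfl hn
  | 1, _, h => by simpa using h
  | n + 2, _, h => by
    refine eq_of_pow_eq_pow_of_map_eq hD hu n.succ_ne_zero ?_
    have hder := congrArg D h
    rw [leibniz_pow, leibniz_pow, ← hD, show n + 2 - 1 = n + 1 by omega] at hder
    exact mul_right_cancel₀ hu (smul_right_injective A (n + 1).succ_ne_zero hder)

end Derivation

theorem at_most_one_constant_general (K : Type) [Field K] [CharZero K]
    (d : Derivation ℤ K K)
    (r M : ℕ) (hr : 2 ≤ r)
    (c : ℕ → K) (hc : ∀ n, n < M → d (c n) = 0)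
    (hcdist : ∀ i j, i < M → j < M → c i = c j → i = j)
    (a ν : K) (x : ℕ → K)
    (heq : ∀ n, n < M → x n ^ r = (ν + c n) ^ r - a)
    (k : ℕ) (hk : k < M) (hxk : d (x k) ≠ 0)
    (i : ℕ) (hi : i < M) (hxi : d (x i) = 0) :
    ∀ j, j < M → j ≠ i → d (x j) ≠ 0 := by
  intro j hj hji hxj
  have hr0 : (r : K) ≠ 0 := Nat.cast_ne_zero.mpr (by omega)
  have hder n (hn : n < M) := d.leibniz_pow_of_pow_eq_add_pow_sub (hc n hn) (heq n hn)
  have hda : d a = r * (ν + c i) ^ (r - 1) * d ν := by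
    have := hder i hi
    rwa [hxi, mul_zero, eq_comm, sub_eq_zero, eq_comm] at this
  have hν : d ν ≠ 0 := by
    intro hν
    have hk' := hder k hk
    simp only [hda, hν, mul_zero, sub_self, mul_eq_zero,
      pow_eq_zero_iff (by omega : r - 1 ≠ 0)] at hk'
    rcases hk' with (hr0' | hxk0) | hxk'
    · exact hr0 hr0'
    · exact hxk (by rw [hxk0, map_zero])
    · exact hxk hxk'
  have hpow : (ν + c i) ^ (r - 1) = (ν + c j) ^ (r - 1) := by
    have hj' := hder j hj
    rw [hxj, mul_zero, hda, eq_comm, sub_eq_zero] at hj'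
    exact (mul_left_cancel₀ hr0 (mul_right_cancel₀ hν hj')).symm
  have hcij : ν + c i = ν + c j :=
    d.eq_of_pow_eq_pow_of_map_eq (by simp [hc i hi, hc j hj]) (by simpa [hc i hi] using hν)
      (by omega) hpow
  exact hji (hcdist j i hj hi (add_left_cancel hcij).symm)

/-- In characteristic zero, for a Hensley system
`x_n^r = (ν + c_n)^r - a` with distinct constants `c_n`: if some `x_k` is
non-constant (w.r.t. a derivation `d` with `d c_n = 0`) and some `x_i` with
`i ≠ k` is constant, then every `x_j` with `j ≠ i` is non-constant. -/
theorem at_most_one_constant (K : Type) [Field K] [CharZero K]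
    (d : Derivation ℤ K K)
    (r M : ℕ) (hr : 2 ≤ r) (hM : 2 ≤ M)
    (c : ℕ → K) (hc : ∀ n, n < M → d (c n) = 0)
    (hcdist : ∀ i j, i < M → j < M → c i = c j → i = j)
    (a ν : K) (x : ℕ → K)
    (heq : ∀ n, n < M → x n ^ r = (ν + c n) ^ r - a)
    (k : ℕ) (hk : k < M) (hxk : d (x k) ≠ 0)
    (i : ℕ) (hi : i < M) (hik : i ≠ k) (hxi : d (x i) = 0) :
    ∀ j, j < M → j ≠ i → d (x j) ≠ 0 :=
  at_most_one_constant_general K d r M hr c hc hcdist a ν x heq k hk hxk i hi hxi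
end
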